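/- arXiv:1211.2341 — 5 statements merged into one kernel-verified Lean document; each statement's English description precedes it below -/
import Mathlib

section
/- Let n ≥ 1 and C₁, C₂ > 0. There exists a constant C > 0, depending only on n, C₁ and C₂, such that the following holds. Let Q ⊆ ℝⁿ be an open convex set with B(0,1) ⊆ Q ⊆ B(0,n). Let w be of class C² on a neighbourhood of cl(Q) with |Dw(q)| ≤ C₁ for all q ∈ Q. For each q ∈ Q let (C_{ij,kℓ}(q))_{1≤i,j,k,ℓ≤n} be real numbers, depending measurably on q, with C_{ij,kℓ}(q) = C_{ji,kℓ}(q), satisfying the MTW sign condition at every q, and such that |C_{ii,kℓ}(q)| ≤ C₂ whenever k = i or ℓ = i. Define the symmetric matrix M(q) by M_{ij}(q) := ∂²_{ij}w(q) − Σ_{k,ℓ} C_{ij,kℓ}(q) ∂_k w(q) ∂_ℓ w(q), and assume M(q) is positive semidefinite for every q ∈ Q. Then ∫_Q ‖M(q)‖ dq ≤ C, where ‖·‖ is the operator norm. -/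
/-!
For positive semidefinite `M` one has `‖M‖ ≤ n · tr M`, so it suffices to bound `∫_Q M_ii`.
Testing the MTW condition with `ξ = e_i` and `η = Dw(q)` with its `i`-th entry set to zero
leaves only the terms with `k = i` or `ℓ = i`, which the hypothesis bounds; hence
`0 ≤ M_ii ≤ ∂_i ∂_i w + n² C₂ C₁²`. On every line parallel to `e_i` the section `Q` is an
interval of length at most `2n`, along which `∫ ∂_i ∂_i w` is a difference of two values of
`∂_i w`, so at most `2 C₁`. Fubini over the cube `[-n, n]^(n-1)` containing the projection
of `Q` along `e_i` gives the bound.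
-/

open MeasureTheory
open scoped BigOperators ENNReal

/-- A tensor `B` satisfies the MTW sign condition if
`∑ B i j k l ξ i ξ j η k η l ≥ 0` for all orthogonal vectors `ξ, η`. -/
def MTWCondition {n : ℕ} (B : Fin n → Fin n → Fin n → Fin n → ℝ) : Prop :=
  ∀ ξ η : Fin n → ℝ, (∑ i, ξ i * η i) = 0 →
    0 ≤ ∑ i, ∑ j, ∑ k, ∑ l, B i j k l * ξ i * ξ j * η k * η l

/-- The operator norm of a real `n×n` matrix, viewed as a linear operator on
Euclidean space. -/
noncomputable def matrixOpNorm {n : ℕ} (A : Matrix (Fin n) (Fin n) ℝ) : ℝ :=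
  ‖LinearMap.toContinuousLinearMap (Matrix.toEuclideanLin A)‖

theorem Matrix.PosSemidef.abs_apply_le {ι : Type*} [Fintype ι] [DecidableEq ι]
    {A : Matrix ι ι ℝ} (hA : A.PosSemidef) (i j : ι) : |A i j| ≤ (A i i + A j j) / 2 := by
  have hsymm : A j i = A i j := by simpa using hA.isHermitian.apply i j
  have hquad : ∀ ε : ℝ, 0 ≤ A i i + ε * (A i j + A j i) + ε ^ 2 * A j j := fun ε => by
    have := hA.dotProduct_mulVec_nonneg (Pi.single i 1 + ε • Pi.single j 1)
    simp only [star_trivial, Matrix.mulVec_add, Matrix.mulVec_smul, Matrix.mulVec_single,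
      MulOpposite.op_one, one_smul, dotProduct_add, add_dotProduct, dotProduct_smul,
      smul_dotProduct, single_dotProduct, Matrix.col_apply, one_mul, smul_eq_mul] at this
    linear_combination this
  have h₁ := hquad 1
  have h₂ := hquad (-1)
  rw [hsymm] at h₁ h₂
  rw [abs_le]
  constructor <;> linarith

theorem EuclideanSpace.norm_le_sum_abs {ι : Type*} [Fintype ι] (x : EuclideanSpace ℝ ι) :
    ‖x‖ ≤ ∑ i, |x i| := by
  classical
  calc ‖x‖ = ‖∑ i, x i • EuclideanSpace.single i (1 : ℝ)‖ := by
        congr 1; ext j; simp [Pi.single_apply]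
    _ ≤ ∑ i, ‖x i • EuclideanSpace.single i (1 : ℝ)‖ := norm_sum_le _ _
    _ = ∑ i, |x i| := by simp [norm_smul]

theorem matrixOpNorm_le_sum_abs {n : ℕ} (A : Matrix (Fin n) (Fin n) ℝ) :
    matrixOpNorm A ≤ ∑ i, ∑ j, |A i j| := by
  refine ContinuousLinearMap.opNorm_le_bound _ (by positivity) fun x => ?_
  calc ‖LinearMap.toContinuousLinearMap (Matrix.toEuclideanLin A) x‖
      ≤ ∑ i, |∑ j, A i j * x j| := by
        simpa [Matrix.toLpLin_apply, Matrix.mulVec, dotProduct] using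
          EuclideanSpace.norm_le_sum_abs (Matrix.toEuclideanLin A x)
    _ ≤ ∑ i, ∑ j, |A i j| * ‖x‖ := by
        gcongr with i
        refine (Finset.abs_sum_le_sum_abs _ _).trans (Finset.sum_le_sum fun j _ => ?_)
        rw [abs_mul]
        gcongr
        simpa using PiLp.norm_apply_le x j
    _ = (∑ i, ∑ j, |A i j|) * ‖x‖ := by simp only [Finset.sum_mul]

theorem Matrix.PosSemidef.matrixOpNorm_le_mul_trace {n : ℕ} {A : Matrix (Fin n) (Fin n) ℝ}
    (hA : A.PosSemidef) : matrixOpNorm A ≤ n * A.trace :=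
  calc matrixOpNorm A ≤ ∑ i, ∑ j, |A i j| := matrixOpNorm_le_sum_abs A
    _ ≤ ∑ i, ∑ j, (A i i + A j j) / 2 := by gcongr with i _ j _; exact hA.abs_apply_le i j
    _ = n * A.trace := by
        simp only [add_div, Finset.sum_add_distrib, Finset.sum_const, Finset.card_univ,
          Fintype.card_fin, nsmul_eq_mul, ← Finset.mul_sum, ← Finset.sum_div, Matrix.trace,
          Matrix.diag]
        ring

theorem MTWCondition.sum_apply_self_nonneg {n : ℕ} {B : Fin n → Fin n → Fin n → Fin n → ℝ}
    (hB : MTWCondition B) (i : Fin n) {η : Fin n → ℝ} (hη : η i = 0) :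
    0 ≤ ∑ k, ∑ l, B i i k l * η k * η l := by
  simpa [Pi.single_apply] using hB (Pi.single i 1) η (by simp [Pi.single_apply, hη])

theorem MTWCondition.neg_le_sum_apply_self {n : ℕ} {B : Fin n → Fin n → Fin n → Fin n → ℝ}
    (hB : MTWCondition B) (i : Fin n) {p : Fin n → ℝ} {C₁ C₂ : ℝ} (hp : ∀ k, |p k| ≤ C₁)
    (hBC : ∀ k l, (k = i ∨ l = i) → |B i i k l| ≤ C₂) :
    -(n ^ 2 * C₂ * C₁ ^ 2) ≤ ∑ k, ∑ l, B i i k l * p k * p l := by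
  set η := Function.update p i 0
  have hC₁ : 0 ≤ C₁ := (abs_nonneg _).trans (hp i)
  have hC₂ : 0 ≤ C₂ := (abs_nonneg _).trans (hBC i i (Or.inl rfl))
  -- only the terms with `k = i` or `l = i` change when `p` is replaced by `η`
  have hterm : ∀ k l, |B i i k l * p k * p l - B i i k l * η k * η l| ≤ C₂ * C₁ ^ 2 := by
    intro k l
    by_cases hkl : k = i ∨ l = i
    · have hη : η k * η l = 0 := by rcases hkl with rfl | rfl <;> simp [η]
      rw [mul_assoc _ (η k), hη, mul_zero, sub_zero, abs_mul, abs_mul, sq, ← mul_assoc]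
      gcongr
      exacts [hBC k l hkl, hp k, hp l]
    · simp only [not_or] at hkl
      simp only [η, Function.update_of_ne hkl.1, Function.update_of_ne hkl.2, sub_self, abs_zero]
      positivity
  have hdiff : -(n ^ 2 * C₂ * C₁ ^ 2) ≤
      ∑ k, ∑ l, (B i i k l * p k * p l - B i i k l * η k * η l) := by
    calc -(n ^ 2 * C₂ * C₁ ^ 2) = ∑ k : Fin n, ∑ l : Fin n, -(C₂ * C₁ ^ 2) := by
          simp only [Finset.sum_neg_distrib, Finset.sum_const, Finset.card_univ,
            Fintype.card_fin, nsmul_eq_mul]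
          ring
      _ ≤ _ := by gcongr with k _ l _; exact neg_le_of_abs_le (hterm k l)
  have hη := hB.sum_apply_self_nonneg i (η := η) (by simp [η])
  simp only [Finset.sum_sub_distrib] at hdiff
  linarith

theorem lintegral_Ioo_ofReal_deriv_add_const {a b K : ℝ} (hab : a ≤ b) {g g' : ℝ → ℝ}
    (hg : ∀ t ∈ Set.Icc a b, HasDerivAt g (g' t) t) (hg' : ContinuousOn g' (Set.Icc a b))
    (hpos : ∀ t ∈ Set.Ioo a b, 0 ≤ g' t + K) :
    ∫⁻ t in Set.Ioo a b, ENNReal.ofReal (g' t + K) = ENNReal.ofReal (g b - g a + (b - a) * K) := by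
  have hint : IntervalIntegrable g' volume a b := hg'.intervalIntegrable_of_Icc hab
  have hFTC : ∫ t in a..b, g' t = g b - g a :=
    intervalIntegral.integral_eq_sub_of_hasDerivAt
      (fun t ht => hg t (Set.uIcc_of_le hab ▸ ht)) hint
  rw [← ofReal_integral_eq_lintegral_ofReal
      ((hint.add intervalIntegrable_const).1.mono_set Set.Ioo_subset_Ioc_self)
      ((ae_restrict_mem measurableSet_Ioo).mono hpos),
    ← integral_Ioc_eq_integral_Ioo, ← intervalIntegral.integral_of_le hab,
    intervalIntegral.integral_add hint intervalIntegrable_const, hFTC,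
    intervalIntegral.integral_const, smul_eq_mul]

theorem Convex.lintegral_ofReal_deriv_add_const_le {s : Set ℝ} (hs : Convex ℝ s)
    {R C K : ℝ} (hsR : s ⊆ Set.Icc (-R) R) (hK : 0 ≤ K) {g g' : ℝ → ℝ}
    (hg : ∀ t ∈ closure s, HasDerivAt g (g' t) t) (hg' : ContinuousOn g' (closure s))
    (hgC : ∀ t ∈ s, |g t| ≤ C) (hpos : ∀ t ∈ s, 0 ≤ g' t + K) :
    ∫⁻ t in s, ENNReal.ofReal (g' t + K) ≤ ENNReal.ofReal (2 * C + 2 * R * K) := by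
  rcases s.eq_empty_or_nonempty with rfl | hne
  · simp
  have hbelow : BddBelow s := ⟨-R, fun t ht => (hsR ht).1⟩
  have habove : BddAbove s := ⟨R, fun t ht => (hsR ht).2⟩
  set a := sInf s
  set b := sSup s
  have ha : a ∈ closure s := csInf_mem_closure hne hbelow
  have hb : b ∈ closure s := csSup_mem_closure hne habove
  have hab : a ≤ b := csInf_le_csSup hne hbelow habove
  have hIcc : Set.Icc a b ⊆ closure s := hs.closure.ordConnected.out ha hb
  have hIoo : Set.Ioo a b ⊆ s :=
    IsConnected.Ioo_csInf_csSup_subset ⟨hne, hs.isPreconnected⟩ hbelow habove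
  have hgC' : ∀ t ∈ closure s, |g t| ≤ C := fun t ht =>
    ContinuousWithinAt.closure_le ht (hg t ht).continuousAt.continuousWithinAt.abs
      continuousWithinAt_const hgC
  have hR : -R ≤ a ∧ b ≤ R :=
    ⟨le_csInf hne fun t ht => (hsR ht).1, csSup_le hne fun t ht => (hsR ht).2⟩
  calc ∫⁻ t in s, ENNReal.ofReal (g' t + K)
      ≤ ∫⁻ t in Set.Icc a b, ENNReal.ofReal (g' t + K) :=
        lintegral_mono_set (subset_Icc_csInf_csSup hbelow habove)
    _ = ∫⁻ t in Set.Ioo a b, ENNReal.ofReal (g' t + K) := (setLIntegral_congr Ioo_ae_eq_Icc).symm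
    _ = ENNReal.ofReal (g b - g a + (b - a) * K) :=
        lintegral_Ioo_ofReal_deriv_add_const hab (fun t ht => hg t (hIcc ht)) (hg'.mono hIcc)
          fun t ht => hpos t (hIoo ht)
    _ ≤ ENNReal.ofReal (2 * C + 2 * R * K) := by
        refine ENNReal.ofReal_le_ofReal ?_
        have := abs_le.1 (hgC' a ha)
        have := abs_le.1 (hgC' b hb)
        nlinarith

section coordLine

variable {m : ℕ} (i : Fin (m + 1)) (y : Fin m → ℝ)

def coordLine (t : ℝ) : EuclideanSpace ℝ (Fin (m + 1)) :=
  WithLp.toLp 2 (i.insertNth t y)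

@[simp] theorem coordLine_apply_self (t : ℝ) : coordLine i y t i = t := by
  simp [coordLine]

@[simp] theorem coordLine_apply_succAbove (t : ℝ) (j : Fin m) :
    coordLine i y t (i.succAbove j) = y j := by
  simp [coordLine]

theorem coordLine_eq_add_smul (t : ℝ) :
    coordLine i y t = coordLine i y 0 + t • EuclideanSpace.single i 1 := by
  ext j
  refine Fin.succAboveCases i ?_ (fun k => ?_) j <;> simp [Fin.succAbove_ne]

theorem hasDerivAt_coordLine (t : ℝ) :
    HasDerivAt (coordLine i y) (EuclideanSpace.single i 1) t := by
  rw [show coordLine i y = fun t => coordLine i y 0 + t • EuclideanSpace.single i 1 from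
    funext (coordLine_eq_add_smul i y)]
  simpa using ((hasDerivAt_id t).smul_const (EuclideanSpace.single i (1 : ℝ))).const_add
    (coordLine i y 0)

theorem continuous_coordLine : Continuous (coordLine i y) :=
  continuous_iff_continuousAt.2 fun t => (hasDerivAt_coordLine i y t).continuousAt

theorem convex_coordLine_preimage {Q : Set (EuclideanSpace ℝ (Fin (m + 1)))} (hQ : Convex ℝ Q) :
    Convex ℝ (coordLine i y ⁻¹' Q) := by
  intro t₁ h₁ t₂ h₂ a b ha hb hab
  have hcomb : coordLine i y (a • t₁ + b • t₂) = a • coordLine i y t₁ + b • coordLine i y t₂ := by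
    obtain rfl : b = 1 - a := by linarith
    rw [coordLine_eq_add_smul i y t₁, coordLine_eq_add_smul i y t₂,
      coordLine_eq_add_smul i y (a • t₁ + (1 - a) • t₂)]
    module
  simpa only [Set.mem_preimage, hcomb] using hQ h₁ h₂ ha hb hab

end coordLine

theorem lintegral_eq_lintegral_lintegral_coordLine {m : ℕ} (i : Fin (m + 1))
    {F : EuclideanSpace ℝ (Fin (m + 1)) → ℝ≥0∞} (hF : Measurable F) :
    ∫⁻ x, F x = ∫⁻ y : Fin m → ℝ, ∫⁻ t : ℝ, F (coordLine i y t) := by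
  have hLp := PiLp.volume_preserving_toLp (Fin (m + 1))
  have hpi :=
    (measurePreserving_piFinSuccAbove (fun _ : Fin (m + 1) => (volume : Measure ℝ)) i).symm
  rw [← hLp.lintegral_comp hF, volume_pi,
    ← hpi.lintegral_comp (f := fun a => F (WithLp.toLp 2 a)) (hF.comp hLp.measurable),
    lintegral_prod_symm _ ?_]
  · rfl
  · exact ((hF.comp hLp.measurable).comp (MeasurableEquiv.measurable _)).aemeasurable

theorem setLIntegral_le_mul_of_lintegral_coordLine_le {m : ℕ}
    {Q : Set (EuclideanSpace ℝ (Fin (m + 1)))} (hQ : MeasurableSet Q) {R : ℝ}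
    (hQR : Q ⊆ Metric.ball 0 R) (i : Fin (m + 1)) {f : EuclideanSpace ℝ (Fin (m + 1)) → ℝ≥0∞}
    (hf : Measurable f) {B : ℝ≥0∞}
    (hB : ∀ y, ∫⁻ t in coordLine i y ⁻¹' Q, f (coordLine i y t) ≤ B) :
    ∫⁻ x in Q, f x ≤ B * ENNReal.ofReal (2 * R) ^ m := by
  set cube : Set (Fin m → ℝ) := Set.univ.pi fun _ => Set.Icc (-R) R
  have hslice : ∀ y, ∫⁻ t, Q.indicator f (coordLine i y t) ≤ cube.indicator (fun _ => B) y := by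
    intro y
    simp_rw [← Set.indicator_comp_right (coordLine i y) (g := f)]
    rw [lintegral_indicator (hQ.preimage (continuous_coordLine i y).measurable)]
    by_cases hy : y ∈ cube
    · rw [Set.indicator_of_mem hy]
      exact hB y
    · suffices coordLine i y ⁻¹' Q = ∅ by simp [this]
      refine Set.eq_empty_of_forall_notMem fun t ht => hy fun j _ => abs_le.1 ?_
      have := mem_ball_zero_iff.1 (hQR ht)
      have := PiLp.norm_apply_le (coordLine i y t) (i.succAbove j)
      rw [coordLine_apply_succAbove, Real.norm_eq_abs] at this
      linarith
  calc ∫⁻ x in Q, f x = ∫⁻ x, Q.indicator f x := (lintegral_indicator hQ _).symm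
    _ ≤ ∫⁻ y, cube.indicator (fun _ => B) y := by
        rw [lintegral_eq_lintegral_lintegral_coordLine i (hf.indicator hQ)]
        exact lintegral_mono hslice
    _ = B * ENNReal.ofReal (2 * R) ^ m := by
        rw [lintegral_indicator_const (MeasurableSet.univ_pi fun _ => measurableSet_Icc),
          volume_pi_pi]
        simp only [Real.volume_Icc, sub_neg_eq_add, ← two_mul, Finset.prod_const,
          Finset.card_univ, Fintype.card_fin]

theorem setLIntegral_ofReal_fderiv_add_const_le {m : ℕ}
    {Q U : Set (EuclideanSpace ℝ (Fin (m + 1)))} (hQm : MeasurableSet Q) (hQc : Convex ℝ Q)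
    {R : ℝ} (hR : 0 ≤ R) (hQR : Q ⊆ Metric.ball 0 R) (hU : IsOpen U) (hQU : closure Q ⊆ U)
    {g : EuclideanSpace ℝ (Fin (m + 1)) → ℝ} (hg : ContDiffOn ℝ 1 g U) {C K : ℝ} (hK : 0 ≤ K)
    (hgC : ∀ x ∈ Q, |g x| ≤ C) (i : Fin (m + 1))
    (hpos : ∀ x ∈ Q, 0 ≤ fderiv ℝ g x (EuclideanSpace.single i 1) + K) :
    ∫⁻ x in Q, ENNReal.ofReal (fderiv ℝ g x (EuclideanSpace.single i 1) + K)
      ≤ ENNReal.ofReal ((2 * C + 2 * R * K) * (2 * R) ^ m) := by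
  rw [ENNReal.ofReal_mul' (by positivity), ENNReal.ofReal_pow (by positivity)]
  have hderiv : ∀ x ∈ U, HasFDerivAt g (fderiv ℝ g x) x := fun x hx =>
    ((hg.differentiableOn one_ne_zero).differentiableAt (hU.mem_nhds hx)).hasFDerivAt
  have hcont : ContinuousOn (fun x => fderiv ℝ g x (EuclideanSpace.single i 1)) U :=
    (hg.continuousOn_fderiv_of_isOpen hU le_rfl).clm_apply continuousOn_const
  refine setLIntegral_le_mul_of_lintegral_coordLine_le hQm hQR i
    (ENNReal.measurable_ofReal.comp ((measurable_fderiv_apply_const ℝ g _).add_const K))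
    fun y => ?_
  have hclosure : ∀ t ∈ closure (coordLine i y ⁻¹' Q), coordLine i y t ∈ U := fun t ht =>
    hQU ((continuous_coordLine i y).closure_preimage_subset Q ht)
  refine (convex_coordLine_preimage i y hQc).lintegral_ofReal_deriv_add_const_le ?_ hK
    (g := g ∘ coordLine i y) (fun t ht => ?_) ?_ (fun t ht => hgC _ ht) (fun t ht => hpos _ ht)
  · intro t ht
    have := PiLp.norm_apply_le (coordLine i y t) i
    rw [coordLine_apply_self, Real.norm_eq_abs] at this
    exact abs_le.1 (this.trans (mem_ball_zero_iff.1 (hQR ht)).le)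
  · exact (hderiv _ (hclosure t ht)).comp_hasDerivAt t (hasDerivAt_coordLine i y t)
  · exact hcont.comp (continuous_coordLine i y).continuousOn hclosure

theorem setLIntegral_ofReal_le_of_le_mul_sum {α ι : Type*} [MeasurableSpace α] [Fintype ι]
    {μ : Measure α} {Q : Set α} (hQ : MeasurableSet Q) {h : α → ℝ} {f : ι → α → ℝ}
    (hf : ∀ i, Measurable (f i)) {c B : ℝ} (hc : 0 ≤ c) (hf₀ : ∀ x ∈ Q, ∀ i, 0 ≤ f i x)
    (hh : ∀ x ∈ Q, h x ≤ c * ∑ i, f i x)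
    (hB : ∀ i, ∫⁻ x in Q, ENNReal.ofReal (f i x) ∂μ ≤ ENNReal.ofReal B) :
    ∫⁻ x in Q, ENNReal.ofReal (h x) ∂μ ≤ ENNReal.ofReal (c * (Fintype.card ι * B)) := by
  calc ∫⁻ x in Q, ENNReal.ofReal (h x) ∂μ
      ≤ ∫⁻ x in Q, ENNReal.ofReal c * ∑ i, ENNReal.ofReal (f i x) ∂μ := by
        refine setLIntegral_mono' hQ fun x hx => ?_
        rw [← ENNReal.ofReal_sum_of_nonneg fun i _ => hf₀ x hx i, ← ENNReal.ofReal_mul hc]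
        exact ENNReal.ofReal_le_ofReal (hh x hx)
    _ = ENNReal.ofReal c * ∑ i, ∫⁻ x in Q, ENNReal.ofReal (f i x) ∂μ := by
        rw [lintegral_const_mul' _ _ ENNReal.ofReal_ne_top,
          lintegral_finsetSum _ (f := fun i x => ENNReal.ofReal (f i x))
            fun i _ => ENNReal.measurable_ofReal.comp (hf i)]
    _ ≤ ENNReal.ofReal c * ∑ _i : ι, ENNReal.ofReal B := by gcongr with i; exact hB i
    _ = ENNReal.ofReal (c * (Fintype.card ι * B)) := by
        rw [Finset.sum_const, Finset.card_univ, nsmul_eq_mul, ENNReal.ofReal_mul hc,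
          ENNReal.ofReal_mul (Nat.cast_nonneg _), ENNReal.ofReal_natCast]

theorem iteratedFDeriv_two_apply_eq_fderiv_apply {𝕜 E F : Type*} [NontriviallyNormedField 𝕜]
    [NormedAddCommGroup E] [NormedSpace 𝕜 E] [NormedAddCommGroup F] [NormedSpace 𝕜 F]
    {f : E → F} {x : E} (hf : DifferentiableAt 𝕜 (fderiv 𝕜 f) x) (u v : E) :
    iteratedFDeriv 𝕜 2 f x ![u, v] = fderiv 𝕜 (fun y => fderiv 𝕜 f y v) x u := by
  rw [iteratedFDeriv_two_apply, fderiv_clm_apply hf (differentiableAt_const v)]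
  simp

/-- abstract form of the `L¹` bound of Lemma 3.2. For a normalized convex
set `B(0,1) ⊆ Q ⊆ B(0,n)`, a `C²` function `w` with `|Dw| ≤ C₁` on `Q`, and measurable
coefficients `𝒞_{ij,kℓ}(q)` symmetric in `(i,j)`, satisfying the MTW sign condition, and
with `|𝒞_{ii,kℓ}| ≤ C₂` whenever `k = i` or `ℓ = i`, if the matrix
`M_{ij} = ∂²_{ij}w − ∑ 𝒞_{ij,kℓ} ∂_k w ∂_ℓ w` is positive semidefinite on `Q`, then
`∫_Q ‖M‖ ≤ C` with `C` depending only on `n`, `C₁`, `C₂`. -/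
theorem L1_bound_normalized_section {n : ℕ} (hn : 1 ≤ n)
    (C₁ C₂ : ℝ) (hC₁ : 0 < C₁) (hC₂ : 0 < C₂) :
    ∃ C : ℝ, 0 < C ∧
    ∀ (Q : Set (EuclideanSpace ℝ (Fin n))), IsOpen Q → Convex ℝ Q →
      Metric.ball (0 : EuclideanSpace ℝ (Fin n)) 1 ⊆ Q →
      Q ⊆ Metric.ball (0 : EuclideanSpace ℝ (Fin n)) n →
    ∀ (w : EuclideanSpace ℝ (Fin n) → ℝ) (U : Set (EuclideanSpace ℝ (Fin n))),
      IsOpen U → closure Q ⊆ U → ContDiffOn ℝ 2 w U →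
      (∀ q ∈ Q, ‖fderiv ℝ w q‖ ≤ C₁) →
    ∀ (𝒞 : EuclideanSpace ℝ (Fin n) → Fin n → Fin n → Fin n → Fin n → ℝ),
      (∀ i j k l, Measurable fun q => 𝒞 q i j k l) →
      (∀ q ∈ Q, ∀ i j k l, 𝒞 q i j k l = 𝒞 q j i k l) →
      (∀ q ∈ Q, MTWCondition (𝒞 q)) →
      (∀ q ∈ Q, ∀ i k l : Fin n, (k = i ∨ l = i) → |𝒞 q i i k l| ≤ C₂) →
    ∀ (M : EuclideanSpace ℝ (Fin n) → Matrix (Fin n) (Fin n) ℝ),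
      (∀ q i j, M q i j =
        iteratedFDeriv ℝ 2 w q ![EuclideanSpace.single i 1, EuclideanSpace.single j 1]
          - ∑ k, ∑ l, 𝒞 q i j k l * fderiv ℝ w q (EuclideanSpace.single k 1)
              * fderiv ℝ w q (EuclideanSpace.single l 1)) →
      (∀ q ∈ Q, (M q).PosSemidef) →
      ∫⁻ q in Q, ENNReal.ofReal (matrixOpNorm (M q)) ≤ ENNReal.ofReal C := by
  obtain ⟨m, rfl⟩ : ∃ m, n = m + 1 := ⟨n - 1, by omega⟩
  set K : ℝ := (m + 1) ^ 2 * C₂ * C₁ ^ 2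
  refine ⟨(m + 1) * ((m + 1) * ((2 * C₁ + 2 * (m + 1) * K) * (2 * (m + 1)) ^ m)),
    by positivity, ?_⟩
  intro Q hQ hQc _ hQR w U hU hQU hw hDw 𝒞 _ _ hMTW hbound M hM hMpsd
  set e : Fin (m + 1) → EuclideanSpace ℝ (Fin (m + 1)) := fun i => EuclideanSpace.single i 1
  set g : Fin (m + 1) → EuclideanSpace ℝ (Fin (m + 1)) → ℝ := fun i x => fderiv ℝ w x (e i)
  have hw' : ContDiffOn ℝ 1 (fderiv ℝ w) U := hw.fderiv_of_isOpen hU (by norm_num)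
  have hgC : ∀ i, ∀ x ∈ Q, |g i x| ≤ C₁ := fun i x hx =>
    ((fderiv ℝ w x).le_opNorm (e i)).trans (by simpa [e] using hDw x hx)
  have hdiag : ∀ q ∈ Q, ∀ i, M q i i ≤ fderiv ℝ (g i) q (e i) + K := by
    intro q hq i
    have hq' : DifferentiableAt ℝ (fderiv ℝ w) q :=
      (hw'.differentiableOn one_ne_zero).differentiableAt (hU.mem_nhds (hQU (subset_closure hq)))
    have := (hMTW q hq).neg_le_sum_apply_self i (fun k => hgC k q hq) (hbound q hq i)
    rw [hM, iteratedFDeriv_two_apply_eq_fderiv_apply hq']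
    push_cast at this ⊢
    linarith
  have hpos : ∀ q ∈ Q, ∀ i, 0 ≤ fderiv ℝ (g i) q (e i) + K := fun q hq i =>
    (hMpsd q hq).diag_nonneg.trans (hdiag q hq i)
  have hL1 := setLIntegral_ofReal_le_of_le_mul_sum hQ.measurableSet
    (fun i => (measurable_fderiv_apply_const ℝ (g i) (e i)).add_const K) (by positivity) hpos
    (fun q hq => (hMpsd q hq).matrixOpNorm_le_mul_trace.trans
      (mul_le_mul_of_nonneg_left (Finset.sum_le_sum fun i _ => hdiag q hq i) (by positivity)))
    fun i => setLIntegral_ofReal_fderiv_add_const_le (R := m + 1) hQ.measurableSet hQc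
      (by positivity) (by exact_mod_cast hQR) hU hQU (hw'.clm_apply contDiffOn_const)
      (by positivity) (hgC i) i fun q hq => hpos q hq i
  simpa using hL1
end

section
/- Let n ≥ 1 and C₁, C₂, λ, δ > 0 with λ ≤ 1. There exists a constant C ≥ 1, depending only on n, C₁, C₂, λ and δ, such that the following holds. Let Q ⊆ ℝⁿ be an open convex set with B(0,1) ⊆ Q ⊆ B(0,n). Let w be of class C² on a neighbourhood of cl(Q) with |Dw(q)| ≤ C₁ for all q ∈ Q. For each q ∈ Q let (C_{ij,kℓ}(q))_{1≤i,j,k,ℓ≤n} be real numbers, depending measurably on q, with C_{ij,kℓ}(q) = C_{ji,kℓ}(q), satisfying the MTW sign condition at every q, and such that |C_{ii,kℓ}(q)| ≤ C₂ whenever k = i or ℓ = i. Define M_{ij}(q) := ∂²_{ij}w(q) − Σ_{k,ℓ} C_{ij,kℓ}(q) ∂_k w(q) ∂_ℓ w(q), assume M(q) is positive semidefinite and λ ≤ det M(q) ≤ 1/λ for every q ∈ Q, and let Q' ⊆ Q be a Lebesgue-measurable set with |Q'| ≥ δ. Then the Lebesgue measure of the set {q ∈ Q' : (1/C)·Id ≤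 M(q) ≤ C·Id} is at least 1/C, where the inequalities between symmetric matrices are in the sense of quadratic forms. -/
open MeasureTheory
open scoped BigOperators ENNReal

open Set

/-!
The MTW condition with `ξ = eᵢ` and `η = Dw` with its `i`-th entry set to zero, together with the
bound on `𝒞ᵢᵢₖₗ` for `k = i` or `l = i`, gives `0 ≤ Mᵢᵢ ≤ ∂ᵢᵢw + K`. On every line parallel to `eᵢ`,
`Q` is an interval of length less than `2n`, and the fundamental theorem of calculus bounds the
integral of `∂ᵢᵢw + K ≥ 0` over it by `2C₁ + 2nK`; by Fubini, `∫_Q tr M ≤ A`. By Chebyshev,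
`tr M < T := 2A/δ + 1` on a part of `Q'` of measure at least `δ/2`. There every eigenvalue of `M` is
at most `tr M < T`, hence, as `det M ≥ λ`, at least `λ / T^(n-1)`.
-/

namespace Matrix

section

open scoped MatrixOrder ComplexOrder

variable {𝕜 ι : Type*} [RCLike 𝕜] [Fintype ι] [DecidableEq ι] {A : Matrix ι ι 𝕜}

theorem IsHermitian.posSemidef_sub_smul_one_iff (hA : A.IsHermitian) (c : ℝ) :
    (A - c • (1 : Matrix ι ι 𝕜)).PosSemidef ↔ ∀ i, c ≤ hA.eigenvalues i := by
  rw [← le_iff, ← Algebra.algebraMap_eq_smul_one, algebraMap_le_iff_le_spectrum hA,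
    hA.spectrum_real_eq_range_eigenvalues, Set.forall_mem_range]

theorem IsHermitian.posSemidef_smul_one_sub_iff (hA : A.IsHermitian) (c : ℝ) :
    (c • (1 : Matrix ι ι 𝕜) - A).PosSemidef ↔ ∀ i, hA.eigenvalues i ≤ c := by
  rw [← le_iff, ← Algebra.algebraMap_eq_smul_one, le_algebraMap_iff_spectrum_le hA,
    hA.spectrum_real_eq_range_eigenvalues, Set.forall_mem_range]

end

variable {ι : Type*} [Fintype ι] [DecidableEq ι] {A : Matrix ι ι ℝ}

theorem PosSemidef.eigenvalues_le_trace (hA : A.PosSemidef) (i : ι) :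
    hA.1.eigenvalues i ≤ A.trace := by
  rw [hA.1.trace_eq_sum_eigenvalues]
  exact Finset.single_le_sum (fun j _ => hA.eigenvalues_nonneg j) (Finset.mem_univ i)

theorem PosSemidef.det_div_pow_le_eigenvalues (hA : A.PosSemidef) {T : ℝ}
    (hT : ∀ j, hA.1.eigenvalues j ≤ T) (i : ι) :
    A.det / T ^ (Fintype.card ι - 1) ≤ hA.1.eigenvalues i := by
  have hμ := hA.eigenvalues_nonneg
  have hdet : A.det = hA.1.eigenvalues i * ∏ j ∈ Finset.univ.erase i, hA.1.eigenvalues j := by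
    rw [hA.1.det_eq_prod_eigenvalues, Finset.mul_prod_erase _ _ (Finset.mem_univ i)]
    simp
  have hP : ∏ j ∈ Finset.univ.erase i, hA.1.eigenvalues j ≤ T ^ (Fintype.card ι - 1) := by
    calc _ ≤ ∏ _j ∈ Finset.univ.erase i, T :=
          Finset.prod_le_prod (fun j _ => hμ j) (fun j _ => hT j)
      _ = _ := by rw [Finset.prod_const, Finset.card_erase_of_mem (Finset.mem_univ i),
          Finset.card_univ]
  rcases (((Finset.prod_nonneg fun j _ => hμ j).trans hP)).eq_or_lt with h | h
  · rw [← h, div_zero]; exact hμ i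
  · rw [div_le_iff₀ h, hdet]
    exact mul_le_mul_of_nonneg_left hP (hμ i)

theorem PosSemidef.inv_smul_one_le_and_le_smul_one (hA : A.PosSemidef) {lam T C : ℝ}
    (hlam : 0 < lam) (hdet : lam ≤ A.det) (hT : 0 < T) (htr : A.trace ≤ T) (hTC : T ≤ C)
    (hC : T ^ (Fintype.card ι - 1) / lam ≤ C) :
    (A - C⁻¹ • (1 : Matrix ι ι ℝ)).PosSemidef ∧ (C • (1 : Matrix ι ι ℝ) - A).PosSemidef := by
  have hle : ∀ i, hA.1.eigenvalues i ≤ T := fun i => (hA.eigenvalues_le_trace i).trans htr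
  refine ⟨(hA.1.posSemidef_sub_smul_one_iff _).2 fun i => ?_,
    (hA.1.posSemidef_smul_one_sub_iff _).2 fun i => (hle i).trans hTC⟩
  have hTk : 0 < T ^ (Fintype.card ι - 1) := by positivity
  calc C⁻¹ ≤ lam / T ^ (Fintype.card ι - 1) := by
        rw [le_div_iff₀ hTk, inv_mul_le_iff₀ (hT.trans_le hTC), ← div_le_iff₀ hlam]; exact hC
    _ ≤ A.det / T ^ (Fintype.card ι - 1) := by gcongr
    _ ≤ _ := hA.det_div_pow_le_eigenvalues hle i

end Matrix

theorem MTWCondition.neg_le_sum {n : ℕ} {B : Fin n → Fin n → Fin n → Fin n → ℝ}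
    (hB : MTWCondition B) (i : Fin n) {g : Fin n → ℝ} {C₁ C₂ : ℝ} (hg : ∀ k, |g k| ≤ C₁)
    (hBi : ∀ k l, (k = i ∨ l = i) → |B i i k l| ≤ C₂) :
    -(2 * n ^ 2 * C₂ * C₁ ^ 2) ≤ ∑ k, ∑ l, B i i k l * g k * g l := by
  set η := Function.update g i 0
  have hη : ∀ k, |η k| ≤ C₁ := fun k => by
    rcases eq_or_ne k i with rfl | hk
    · simp only [η, Function.update_self, abs_zero]; exact (abs_nonneg _).trans (hg k)
    · simpa only [η, Function.update_of_ne hk] using hg k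
  have hMTW : 0 ≤ ∑ k, ∑ l, B i i k l * η k * η l := by
    have := hB (Pi.single i 1) η (by simp [η, Pi.single_apply])
    simpa [Pi.single_apply, ite_mul, mul_ite, Finset.sum_ite_eq', mul_assoc] using this
  -- `g k * g l = η k * η l` unless `k = i` or `l = i`, where `B i i k l` is bounded
  have hterm : ∀ k l, |B i i k l * g k * g l - B i i k l * η k * η l| ≤ 2 * C₂ * C₁ ^ 2 := by
    intro k l
    by_cases hkl : k = i ∨ l = i
    · have hC₁ : 0 ≤ C₁ := (abs_nonneg _).trans (hg k)
      have hgg : |g k * g l - η k * η l| ≤ 2 * C₁ ^ 2 := by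
        calc _ ≤ |g k| * |g l| + |η k| * |η l| := by
              rw [← abs_mul, ← abs_mul]; exact abs_sub _ _
          _ ≤ C₁ * C₁ + C₁ * C₁ :=
              add_le_add (mul_le_mul (hg k) (hg l) (abs_nonneg _) hC₁)
                (mul_le_mul (hη k) (hη l) (abs_nonneg _) hC₁)
          _ = 2 * C₁ ^ 2 := by ring
      calc _ = |B i i k l| * |g k * g l - η k * η l| := by rw [← abs_mul]; ring_nf
        _ ≤ C₂ * (2 * C₁ ^ 2) := by
            gcongr
            exacts [(abs_nonneg _).trans (hBi k l hkl), hBi k l hkl]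
        _ = _ := by ring
    · have hC₂ : 0 ≤ C₂ := (abs_nonneg _).trans (hBi i i (Or.inl rfl))
      push Not at hkl
      simpa [η, hkl.1, hkl.2] using mul_nonneg (mul_nonneg zero_le_two hC₂) (sq_nonneg C₁)
  have hsum : -(n * (n * (2 * C₂ * C₁ ^ 2))) ≤
      ∑ k, ∑ l, (B i i k l * g k * g l - B i i k l * η k * η l) := by
    calc _ = ∑ _k : Fin n, ∑ _l : Fin n, -(2 * C₂ * C₁ ^ 2) := by simp
      _ ≤ _ := Finset.sum_le_sum fun k _ =>
          Finset.sum_le_sum fun l _ => (abs_le.1 (hterm k l)).1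
  simp only [Finset.sum_sub_distrib] at hsum
  linarith

theorem EuclideanSpace.abs_apply_single_le_opNorm {ι : Type*} [Fintype ι] [DecidableEq ι]
    (f : EuclideanSpace ℝ ι →L[ℝ] ℝ) (k : ι) : |f (EuclideanSpace.single k 1)| ≤ ‖f‖ := by
  simpa using f.le_opNorm (EuclideanSpace.single k 1)

theorem MTWCondition.iteratedFDeriv_sub_le {n : ℕ} {B : Fin n → Fin n → Fin n → Fin n → ℝ}
    (hB : MTWCondition B) {w : EuclideanSpace ℝ (Fin n) → ℝ} {q : EuclideanSpace ℝ (Fin n)}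
    {C₁ C₂ : ℝ} (hgrad : ‖fderiv ℝ w q‖ ≤ C₁)
    (hBi : ∀ i k l, (k = i ∨ l = i) → |B i i k l| ≤ C₂) (i : Fin n) :
    iteratedFDeriv ℝ 2 w q ![EuclideanSpace.single i 1, EuclideanSpace.single i 1]
        - ∑ k, ∑ l, B i i k l * fderiv ℝ w q (EuclideanSpace.single k 1)
          * fderiv ℝ w q (EuclideanSpace.single l 1)
      ≤ fderiv ℝ (fderiv ℝ w) q (EuclideanSpace.single i 1) (EuclideanSpace.single i 1)
        + 2 * n ^ 2 * C₂ * C₁ ^ 2 := by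
  have := hB.neg_le_sum i
    (fun k => (EuclideanSpace.abs_apply_single_le_opNorm _ k).trans hgrad) (hBi i)
  rw [iteratedFDeriv_two_apply]
  simp only [Matrix.cons_val_zero, Matrix.cons_val_one]
  linarith

theorem measure_sub_le_measure_of_lintegral_le {α : Type*} [MeasurableSpace α]
    {μ : Measure α} {s t : Set α} {f : α → ℝ≥0∞} (hf : AEMeasurable f (μ.restrict s))
    {c ε : ℝ≥0∞} (hc₀ : c ≠ 0) (hc : c ≠ ∞) (h : ∫⁻ x in s, f x ∂μ ≤ ε * c)
    (hst : ∀ x ∈ s, f x < c → x ∈ t) :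
    μ s - ε ≤ μ t := by
  have hlarge : μ {x ∈ s | c ≤ f x} ≤ ε := by
    refine (ENNReal.mul_le_mul_iff_right hc₀ hc).1 ?_
    calc c * μ {x ∈ s | c ≤ f x} ≤ c * μ.restrict s {x | c ≤ f x} :=
          mul_le_mul_right
            ((measure_mono (inter_comm _ _).subset).trans (Measure.le_restrict_apply _ _)) c
      _ ≤ ∫⁻ x in s, f x ∂μ := mul_meas_ge_le_lintegral₀ hf c
      _ ≤ c * ε := h.trans_eq (mul_comm _ _)
  refine tsub_le_iff_right.2 ?_
  calc μ s ≤ μ (t ∪ {x ∈ s | c ≤ f x}) :=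
        measure_mono fun x hx => (lt_or_ge (f x) c).imp (hst x hx) (⟨hx, ·⟩)
    _ ≤ _ := (measure_union_le _ _).trans (add_le_add le_rfl hlarge)

theorem lintegral_Icc_ofReal_eq_sub_of_hasDerivAt {a b : ℝ} (hab : a ≤ b) {φ ψ : ℝ → ℝ}
    (hφ : ∀ t ∈ Icc a b, HasDerivAt φ (ψ t) t) (hψ : ContinuousOn ψ (Icc a b))
    (hψ0 : ∀ t ∈ Icc a b, 0 ≤ ψ t) :
    ∫⁻ t in Icc a b, ENNReal.ofReal (ψ t) = ENNReal.ofReal (φ b - φ a) := by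
  rw [← ofReal_integral_eq_lintegral_ofReal (hψ.integrableOn_compact isCompact_Icc)
    ((ae_restrict_iff' measurableSet_Icc).2 (Filter.Eventually.of_forall hψ0)),
    integral_Icc_eq_integral_Ioc, ← intervalIntegral.integral_of_le hab,
    intervalIntegral.integral_eq_sub_of_hasDerivAt (fun t ht => hφ t (uIcc_of_le hab ▸ ht))
      ((uIcc_of_le hab ▸ hψ).intervalIntegrable)]

theorem lintegral_ofReal_add_le_of_hasDerivAt {s : Set ℝ} (hs : Convex ℝ s) {R : ℝ}
    (hsR : s ⊆ Ioo (-R) R) {φ ψ : ℝ → ℝ} {C K : ℝ} (hK : 0 ≤ K)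
    (hφ : ∀ t ∈ closure s, HasDerivAt φ (ψ t) t) (hψ : ContinuousOn ψ (closure s))
    (hφC : ∀ t ∈ s, |φ t| ≤ C) (hψK : ∀ t ∈ s, 0 ≤ ψ t + K) :
    ∫⁻ t in s, ENNReal.ofReal (ψ t + K) ≤ ENNReal.ofReal (2 * C + 2 * R * K) := by
  rcases s.eq_empty_or_nonempty with rfl | hne
  · simp
  have hbdd : BddBelow s := ⟨-R, fun t ht => (hsR ht).1.le⟩
  have hbdd' : BddAbove s := ⟨R, fun t ht => (hsR ht).2.le⟩
  have hIcc : Icc (sInf s) (sSup s) ⊆ closure s :=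
    hs.closure.ordConnected.out (csInf_mem_closure hne hbdd) (csSup_mem_closure hne hbdd')
  have hab : sInf s ≤ sSup s := csInf_le_csSup hne hbdd hbdd'
  have hclR : closure s ⊆ Icc (-R) R :=
    closure_minimal (hsR.trans Ioo_subset_Icc_self) isClosed_Icc
  have hφcont : ContinuousOn φ (closure s) := fun t ht =>
    (hφ t ht).continuousAt.continuousWithinAt
  have hφC' : ∀ t ∈ closure s, |φ t| ≤ C := fun t ht =>
    ContinuousWithinAt.closure_le ht ((hφcont.abs t ht).mono subset_closure)
      continuousWithinAt_const hφC
  have hψK' : ∀ t ∈ closure s, 0 ≤ ψ t + K := fun t ht =>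
    ContinuousWithinAt.closure_le ht continuousWithinAt_const
      (((hψ.add continuousOn_const) t ht).mono subset_closure) hψK
  have hFTC := lintegral_Icc_ofReal_eq_sub_of_hasDerivAt hab (φ := fun t => φ t + K * t)
    (fun t ht => ((hφ t (hIcc ht)).add ((hasDerivAt_id t).const_mul K)).congr_deriv (by simp))
    ((hψ.mono hIcc).add continuousOn_const) (fun t ht => hψK' t (hIcc ht))
  calc ∫⁻ t in s, ENNReal.ofReal (ψ t + K)
      ≤ ∫⁻ t in Icc (sInf s) (sSup s), ENNReal.ofReal (ψ t + K) :=
        lintegral_mono_set fun t ht => ⟨csInf_le hbdd ht, le_csSup hbdd' ht⟩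
    _ = _ := hFTC
    _ ≤ _ := by
        apply ENNReal.ofReal_le_ofReal
        have ha := abs_le.1 (hφC' _ (hIcc ⟨le_rfl, hab⟩))
        have hb := abs_le.1 (hφC' _ (hIcc ⟨hab, le_rfl⟩))
        have haR := (hclR (hIcc ⟨le_rfl, hab⟩)).1
        have hbR := (hclR (hIcc ⟨hab, le_rfl⟩)).2
        nlinarith

section

variable {E : Type*} [NormedAddCommGroup E] [NormedSpace ℝ E]

theorem lintegral_line_ofReal_fderiv_fderiv_add_le {Q U : Set E} (hQ : Convex ℝ Q)
    (hU : IsOpen U) (hQU : closure Q ⊆ U) {w : E → ℝ} (hw : ContDiffOn ℝ 2 w U)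
    {C₁ K R : ℝ} (hK : 0 ≤ K) (hgrad : ∀ q ∈ Q, ‖fderiv ℝ w q‖ ≤ C₁) (p v : E)
    (hpos : ∀ q ∈ Q, 0 ≤ fderiv ℝ (fderiv ℝ w) q v v + K)
    (hR : ∀ t, p + t • v ∈ Q → |t| < R) :
    ∫⁻ t in {t : ℝ | p + t • v ∈ Q}, ENNReal.ofReal (fderiv ℝ (fderiv ℝ w) (p + t • v) v v + K)
      ≤ ENNReal.ofReal (2 * (C₁ * ‖v‖) + 2 * R * K) := by
  have hline : Continuous fun t : ℝ => p + t • v := by fun_prop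
  have hcl : ∀ t ∈ closure {t : ℝ | p + t • v ∈ Q}, p + t • v ∈ U := fun t ht =>
    hQU (hline.closure_preimage_subset Q ht)
  have hDw : ContDiffOn ℝ 1 (fderiv ℝ w) U := hw.fderiv_of_isOpen hU (by norm_num)
  refine lintegral_ofReal_add_le_of_hasDerivAt
    ((hQ.translate_preimage_right p).linear_preimage (LinearMap.toSpanSingleton ℝ E v))
    (fun t ht => abs_lt.1 (hR t ht)) hK (φ := fun t => fderiv ℝ w (p + t • v) v) ?_ ?_ ?_ ?_
  · intro t ht
    have hD2 : HasFDerivAt (fderiv ℝ w) (fderiv ℝ (fderiv ℝ w) (p + t • v)) (p + t • v) :=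
      ((hDw.differentiableOn one_ne_zero).differentiableAt (hU.mem_nhds (hcl t ht))).hasFDerivAt
    have := (ContinuousLinearMap.apply ℝ ℝ v).hasFDerivAt.comp_hasDerivAt t
      (hD2.comp_hasDerivAt t (((hasDerivAt_id t).smul_const v).const_add p))
    simp only [one_smul] at this
    exact this
  · exact ((hDw.continuousOn_fderiv_of_isOpen hU le_rfl).clm_apply continuousOn_const
      |>.clm_apply continuousOn_const).comp hline.continuousOn hcl
  · exact fun t ht => (ContinuousLinearMap.le_opNorm _ v).trans
      (mul_le_mul_of_nonneg_right (hgrad _ ht) (norm_nonneg v))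
  · exact fun t ht => hpos _ ht

end

namespace EuclideanSpace

variable {m : ℕ} (i : Fin (m + 1))

theorem lintegral_eq_lintegral_insertNth {F : EuclideanSpace ℝ (Fin (m + 1)) → ℝ≥0∞}
    (hF : Measurable F) :
    ∫⁻ q, F q = ∫⁻ y : Fin m → ℝ, ∫⁻ t : ℝ, F (WithLp.toLp 2 (i.insertNth t y)) := by
  have hF' : Measurable fun x : Fin (m + 1) → ℝ => F (WithLp.toLp 2 x) :=
    hF.comp (WithLp.measurable_toLp 2 _)
  rw [← (PiLp.volume_preserving_toLp (Fin (m + 1))).lintegral_comp hF, volume_pi,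
    ← ((measurePreserving_piFinSuccAbove (fun _ => (volume : Measure ℝ)) i).symm).lintegral_comp
      hF']
  exact lintegral_prod_symm _ (hF'.comp (MeasurableEquiv.measurable _)).aemeasurable

theorem toLp_insertNth_eq_add_smul (y : Fin m → ℝ) (t : ℝ) :
    WithLp.toLp 2 (i.insertNth t y) =
      WithLp.toLp 2 (i.insertNth 0 y) + t • EuclideanSpace.single i (1 : ℝ) := by
  ext j
  rcases eq_or_ne j i with rfl | hj
  · simp
  · obtain ⟨j, rfl⟩ := Fin.exists_succAbove_eq hj
    simp [hj]

theorem lintegral_le_of_lintegral_insertNth_le {F : EuclideanSpace ℝ (Fin (m + 1)) → ℝ≥0∞}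
    (hF : Measurable F) {R : ℝ} (hsupp : ∀ q, F q ≠ 0 → ‖q‖ < R) {B : ℝ≥0∞}
    (hline : ∀ y, ∫⁻ t : ℝ, F (WithLp.toLp 2 (i.insertNth t y)) ≤ B) :
    ∫⁻ q, F q ≤ B * ENNReal.ofReal (2 * R) ^ m := by
  set box : Set (Fin m → ℝ) := univ.pi fun _ => Ioo (-R) R
  have hbox : ∀ y, ∫⁻ t : ℝ, F (WithLp.toLp 2 (i.insertNth t y)) ≤
      box.indicator (fun _ => B) y := by
    intro y
    by_cases hy : y ∈ box
    · simpa [indicator_of_mem hy] using hline y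
    · have hzero : ∀ t, F (WithLp.toLp 2 (i.insertNth t y)) = 0 := fun t => by
        by_contra hne
        refine hy fun j _ => abs_lt.1 ?_
        have := PiLp.norm_apply_le
          (WithLp.toLp 2 (i.insertNth t y : Fin (m + 1) → ℝ)) (i.succAbove j)
        simp only [Fin.insertNth_apply_succAbove, Real.norm_eq_abs] at this
        exact this.trans_lt (hsupp _ hne)
      simp [hzero]
  calc ∫⁻ q, F q ≤ ∫⁻ y, box.indicator (fun _ => B) y := by
        rw [lintegral_eq_lintegral_insertNth i hF]; exact lintegral_mono hbox
    _ = B * ENNReal.ofReal (2 * R) ^ m := by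
        rw [lintegral_indicator_const (MeasurableSet.univ_pi fun _ => measurableSet_Ioo),
          volume_pi_pi]
        simp [Real.volume_Ioo, show R - -R = 2 * R by ring]

end EuclideanSpace

section

variable {m : ℕ} {Q U : Set (EuclideanSpace ℝ (Fin (m + 1)))}
  {w : EuclideanSpace ℝ (Fin (m + 1)) → ℝ} {C₁ K R : ℝ}

theorem lintegral_ofReal_fderiv_fderiv_single_add_le (hQo : IsOpen Q) (hQc : Convex ℝ Q)
    (hQR : Q ⊆ Metric.ball 0 R) (hU : IsOpen U) (hQU : closure Q ⊆ U) (hw : ContDiffOn ℝ 2 w U)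
    (hC₁ : 0 ≤ C₁) (hK : 0 ≤ K) (hgrad : ∀ q ∈ Q, ‖fderiv ℝ w q‖ ≤ C₁) (i : Fin (m + 1))
    (hpos : ∀ q ∈ Q, 0 ≤ fderiv ℝ (fderiv ℝ w) q (EuclideanSpace.single i 1)
      (EuclideanSpace.single i 1) + K) :
    ∫⁻ q in Q, ENNReal.ofReal (fderiv ℝ (fderiv ℝ w) q (EuclideanSpace.single i 1)
      (EuclideanSpace.single i 1) + K) ≤ ENNReal.ofReal ((2 * C₁ + 2 * R * K) * (2 * R) ^ m) := by
  set e : EuclideanSpace ℝ (Fin (m + 1)) := EuclideanSpace.single i 1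
  rcases Q.eq_empty_or_nonempty with rfl | ⟨q₀, hq₀⟩
  · simp
  have hR : 0 ≤ R := by simpa using (norm_nonneg q₀).trans (mem_ball_zero_iff.1 (hQR hq₀)).le
  rw [← lintegral_indicator hQo.measurableSet, ENNReal.ofReal_mul (by positivity),
    ENNReal.ofReal_pow (by positivity)]
  refine EuclideanSpace.lintegral_le_of_lintegral_insertNth_le i
    ((by fun_prop : Measurable fun q => ENNReal.ofReal (fderiv ℝ (fderiv ℝ w) q e e + K)).indicator
      hQo.measurableSet) (fun q hq => mem_ball_zero_iff.1 (hQR (mem_of_indicator_ne_zero hq)))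
    fun y => ?_
  obtain ⟨p, hp⟩ : ∃ p, ∀ t, WithLp.toLp 2 (i.insertNth t y : Fin (m + 1) → ℝ) = p + t • e :=
    ⟨_, EuclideanSpace.toLp_insertNth_eq_add_smul i y⟩
  have hline : Continuous fun t : ℝ => p + t • e := by fun_prop
  simp_rw [hp, ← indicator_comp_right (fun t : ℝ => p + t • e), Function.comp_def]
  rw [lintegral_indicator (hQo.preimage hline).measurableSet]
  have hR' : ∀ t, p + t • e ∈ Q → |t| < R := fun t ht => by
    have := PiLp.norm_apply_le (p + t • e) i
    rw [← hp t] at this ht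
    simp only [Fin.insertNth_apply_same, Real.norm_eq_abs] at this
    exact this.trans_lt (mem_ball_zero_iff.1 (hQR ht))
  have := lintegral_line_ofReal_fderiv_fderiv_add_le hQc hU hQU hw hK hgrad p e hpos hR'
  rwa [PiLp.norm_single, norm_one, mul_one] at this

theorem lintegral_ofReal_sum_fderiv_fderiv_single_add_le (hQo : IsOpen Q) (hQc : Convex ℝ Q)
    (hQR : Q ⊆ Metric.ball 0 R) (hU : IsOpen U) (hQU : closure Q ⊆ U) (hw : ContDiffOn ℝ 2 w U)
    (hC₁ : 0 ≤ C₁) (hK : 0 ≤ K) (hgrad : ∀ q ∈ Q, ‖fderiv ℝ w q‖ ≤ C₁)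
    (hpos : ∀ q ∈ Q, ∀ i, 0 ≤ fderiv ℝ (fderiv ℝ w) q (EuclideanSpace.single i 1)
      (EuclideanSpace.single i 1) + K) :
    ∫⁻ q in Q, ENNReal.ofReal (∑ i, (fderiv ℝ (fderiv ℝ w) q (EuclideanSpace.single i 1)
      (EuclideanSpace.single i 1) + K))
      ≤ ENNReal.ofReal ((m + 1 : ℕ) * ((2 * C₁ + 2 * R * K) * (2 * R) ^ m)) := by
  rw [setLIntegral_congr_fun hQo.measurableSet fun q hq =>
      ENNReal.ofReal_sum_of_nonneg fun i _ => hpos q hq i,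
    lintegral_finsetSum _ fun i _ => by fun_prop]
  calc _ ≤ ∑ _i : Fin (m + 1), ENNReal.ofReal ((2 * C₁ + 2 * R * K) * (2 * R) ^ m) :=
        Finset.sum_le_sum fun i _ =>
          lintegral_ofReal_fderiv_fderiv_single_add_le hQo hQc hQR hU hQU hw hC₁ hK hgrad i
            fun q hq => hpos q hq i
    _ = _ := by
        rw [Finset.sum_const, Finset.card_univ, Fintype.card_fin, nsmul_eq_mul,
          ENNReal.ofReal_mul (Nat.cast_nonneg (m + 1)), ENNReal.ofReal_natCast]

end

theorem good_matrix_set_lower_bound_general {n : ℕ} (hn : 1 ≤ n)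
    (C₁ C₂ lam δ : ℝ) (hC₁ : 0 < C₁) (hC₂ : 0 < C₂)
    (hlam0 : 0 < lam) (hδ : 0 < δ) :
    ∃ C : ℝ, 1 ≤ C ∧
    ∀ (Q : Set (EuclideanSpace ℝ (Fin n))), IsOpen Q → Convex ℝ Q →
      Metric.ball (0 : EuclideanSpace ℝ (Fin n)) 1 ⊆ Q →
      Q ⊆ Metric.ball (0 : EuclideanSpace ℝ (Fin n)) n →
    ∀ (w : EuclideanSpace ℝ (Fin n) → ℝ) (U : Set (EuclideanSpace ℝ (Fin n))),
      IsOpen U → closure Q ⊆ U → ContDiffOn ℝ 2 w U →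
      (∀ q ∈ Q, ‖fderiv ℝ w q‖ ≤ C₁) →
    ∀ (𝒞 : EuclideanSpace ℝ (Fin n) → Fin n → Fin n → Fin n → Fin n → ℝ),
      (∀ i j k l, Measurable fun q => 𝒞 q i j k l) →
      (∀ q ∈ Q, ∀ i j k l, 𝒞 q i j k l = 𝒞 q j i k l) →
      (∀ q ∈ Q, MTWCondition (𝒞 q)) →
      (∀ q ∈ Q, ∀ i k l : Fin n, (k = i ∨ l = i) → |𝒞 q i i k l| ≤ C₂) →
    ∀ (M : EuclideanSpace ℝ (Fin n) → Matrix (Fin n) (Fin n) ℝ),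
      (∀ q i j, M q i j =
        iteratedFDeriv ℝ 2 w q ![EuclideanSpace.single i 1, EuclideanSpace.single j 1]
          - ∑ k, ∑ l, 𝒞 q i j k l * fderiv ℝ w q (EuclideanSpace.single k 1)
              * fderiv ℝ w q (EuclideanSpace.single l 1)) →
      (∀ q ∈ Q, (M q).PosSemidef) →
      (∀ q ∈ Q, lam ≤ (M q).det ∧ (M q).det ≤ 1 / lam) →
    ∀ (Q' : Set (EuclideanSpace ℝ (Fin n))), MeasurableSet Q' → Q' ⊆ Q →
      ENNReal.ofReal δ ≤ volume Q' →
      ENNReal.ofReal (1 / C) ≤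
        volume {q ∈ Q' | (M q - C⁻¹ • (1 : Matrix (Fin n) (Fin n) ℝ)).PosSemidef ∧
          (C • (1 : Matrix (Fin n) (Fin n) ℝ) - M q).PosSemidef} := by
  obtain ⟨m, rfl⟩ : ∃ m, n = m + 1 := ⟨n - 1, by omega⟩
  set R : ℝ := ((m + 1 : ℕ) : ℝ)
  set K : ℝ := 2 * R ^ 2 * C₂ * C₁ ^ 2
  set A : ℝ := R * ((2 * C₁ + 2 * R * K) * (2 * R) ^ m)
  set T : ℝ := 2 * A / δ + 1
  set C : ℝ := max (max T (T ^ m / lam)) (2 / δ)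
  have hT : 1 ≤ T := le_add_of_nonneg_left (by positivity)
  have hTC : T ≤ C := (le_max_left _ _).trans (le_max_left _ _)
  refine ⟨C, hT.trans hTC, ?_⟩
  intro Q hQo hQc _ hQR w U hU hQU hw hgrad 𝒞 _ _ hmtw h𝒞 M hM hpsd hdet Q' _ hQ'Q hQ'
  set D : EuclideanSpace ℝ (Fin (m + 1)) → Fin (m + 1) → ℝ := fun q i =>
    fderiv ℝ (fderiv ℝ w) q (EuclideanSpace.single i 1) (EuclideanSpace.single i 1) + K
  have hdiag : ∀ q ∈ Q, ∀ i, M q i i ≤ D q i := fun q hq i =>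
    (hM q i i).trans_le ((hmtw q hq).iteratedFDeriv_sub_le (hgrad q hq) (h𝒞 q hq) i)
  have hpos : ∀ q ∈ Q, ∀ i, 0 ≤ D q i := fun q hq i =>
    (hpsd q hq).diag_nonneg.trans (hdiag q hq i)
  have hint : ∫⁻ q in Q', ENNReal.ofReal (∑ i, D q i) ≤
      ENNReal.ofReal (δ / 2) * ENNReal.ofReal T := by
    have hAT : A ≤ δ / 2 * T := by simp only [T]; field_simp; linarith
    calc _ ≤ ∫⁻ q in Q, ENNReal.ofReal (∑ i, D q i) := lintegral_mono_set hQ'Q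
      _ ≤ ENNReal.ofReal A := lintegral_ofReal_sum_fderiv_fderiv_single_add_le hQo hQc hQR hU
          hQU hw hC₁.le (by positivity) hgrad hpos
      _ ≤ _ := by rw [← ENNReal.ofReal_mul (by positivity)]; exact ENNReal.ofReal_le_ofReal hAT
  have h1C : 1 / C ≤ δ - δ / 2 := by
    rw [sub_half, one_div_le (by linarith) (by positivity), one_div_div]
    exact le_max_right _ _
  calc ENNReal.ofReal (1 / C) ≤ ENNReal.ofReal δ - ENNReal.ofReal (δ / 2) := by
        rw [← ENNReal.ofReal_sub _ (by positivity)]; exact ENNReal.ofReal_le_ofReal h1C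
    _ ≤ volume Q' - ENNReal.ofReal (δ / 2) := tsub_le_tsub_right hQ' _
    _ ≤ _ := measure_sub_le_measure_of_lintegral_le (by fun_prop)
        (ENNReal.ofReal_pos.2 (by linarith)).ne' ENNReal.ofReal_ne_top hint fun q hq hlt => by
      have htr : (M q).trace ≤ T := (Finset.sum_le_sum fun i _ => hdiag q (hQ'Q hq) i).trans
        (ENNReal.ofReal_lt_ofReal_iff'.1 hlt).1.le
      refine ⟨hq, (hpsd q (hQ'Q hq)).inv_smul_one_le_and_le_smul_one hlam0 (hdet q (hQ'Q hq)).1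
        (by linarith) htr hTC ?_⟩
      simpa only [Fintype.card_fin, Nat.add_sub_cancel] using
        (le_max_right T _).trans (le_max_left _ (2 / δ))

/-- abstract form of Lemma 3.3. With the notation of the `L¹` bound
(normalized convex set `Q`, `C²` function `w` with bounded gradient, measurable MTW
coefficients `𝒞`), if moreover `λ ≤ det M ≤ 1/λ` on `Q` and `Q' ⊆ Q` has measure at
least `δ`, then the set of points of `Q'` where `(1/C)·Id ≤ M ≤ C·Id` has measure at
least `1/C`, with `C ≥ 1` depending only on `n`, `C₁`, `C₂`, `λ`, `δ`. -/
theorem good_matrix_set_lower_bound {n : ℕ} (hn : 1 ≤ n)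
    (C₁ C₂ lam δ : ℝ) (hC₁ : 0 < C₁) (hC₂ : 0 < C₂)
    (hlam0 : 0 < lam) (hlam1 : lam ≤ 1) (hδ : 0 < δ) :
    ∃ C : ℝ, 1 ≤ C ∧
    ∀ (Q : Set (EuclideanSpace ℝ (Fin n))), IsOpen Q → Convex ℝ Q →
      Metric.ball (0 : EuclideanSpace ℝ (Fin n)) 1 ⊆ Q →
      Q ⊆ Metric.ball (0 : EuclideanSpace ℝ (Fin n)) n →
    ∀ (w : EuclideanSpace ℝ (Fin n) → ℝ) (U : Set (EuclideanSpace ℝ (Fin n))),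
      IsOpen U → closure Q ⊆ U → ContDiffOn ℝ 2 w U →
      (∀ q ∈ Q, ‖fderiv ℝ w q‖ ≤ C₁) →
    ∀ (𝒞 : EuclideanSpace ℝ (Fin n) → Fin n → Fin n → Fin n → Fin n → ℝ),
      (∀ i j k l, Measurable fun q => 𝒞 q i j k l) →
      (∀ q ∈ Q, ∀ i j k l, 𝒞 q i j k l = 𝒞 q j i k l) →
      (∀ q ∈ Q, MTWCondition (𝒞 q)) →
      (∀ q ∈ Q, ∀ i k l : Fin n, (k = i ∨ l = i) → |𝒞 q i i k l| ≤ C₂) →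
    ∀ (M : EuclideanSpace ℝ (Fin n) → Matrix (Fin n) (Fin n) ℝ),
      (∀ q i j, M q i j =
        iteratedFDeriv ℝ 2 w q ![EuclideanSpace.single i 1, EuclideanSpace.single j 1]
          - ∑ k, ∑ l, 𝒞 q i j k l * fderiv ℝ w q (EuclideanSpace.single k 1)
              * fderiv ℝ w q (EuclideanSpace.single l 1)) →
      (∀ q ∈ Q, (M q).PosSemidef) →
      (∀ q ∈ Q, lam ≤ (M q).det ∧ (M q).det ≤ 1 / lam) →
    ∀ (Q' : Set (EuclideanSpace ℝ (Fin n))), MeasurableSet Q' → Q' ⊆ Q →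
      ENNReal.ofReal δ ≤ volume Q' →
      ENNReal.ofReal (1 / C) ≤
        volume {q ∈ Q' | (M q - C⁻¹ • (1 : Matrix (Fin n) (Fin n) ℝ)).PosSemidef ∧
          (C • (1 : Matrix (Fin n) (Fin n) ℝ) - M q).PosSemidef} :=
  good_matrix_set_lower_bound_general hn C₁ C₂ lam δ hC₁ hC₂ hlam0 hδ
end

section
/- Let n ≥ 1 and σ ∈ (0,1). Suppose that for every x ∈ ℝⁿ and every h > 0 we are given an open set S(x,h) ⊆ ℝⁿ such that: (i) x ∈ S(x,h); (ii) S(x,h) ⊆ S(x,h') whenever 0 < h ≤ h'; (iii) (engulfing) for all x, y ∈ ℝⁿ and h > 0, if S(x,h) ∩ S(y,h) ≠ ∅ then S(y,h) ⊆ S(x, h/σ). Let D ⊆ ℝⁿ be a compact set and let h : D → (0,∞) be a function with sup_{x∈D} h(x) < ∞. Then there exist finitely many points x₁, …, x_m ∈ D such that D ⊆ ⋃_{i=1}^m S(x_i, h(x_i)) and the sets S(x_i, σ h(x_i)/2), i = 1, …, m, are pairwise disjoint. -/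
/-!
Compactness reduces to finitely many centres. Among those, a Vitali-type selection (with
enlargement factor `2`) yields a subfamily with pairwise disjoint sections `S(x, σ h(x)/2)` such
that every discarded section `S(y, σ h(y)/2)` meets a selected one `S(x, σ h(x)/2)` with
`h(y) ≤ 2 h(x)`. Enlarging both to height `σ h(x)` and engulfing puts `S(y, σ h(y)/2)` inside
`S(x, h(x))`.
-/

open Set

section Sections

variable {α : Type*} {σ : ℝ} {S : α → ℝ → Set α}

theorem section_subset_of_inter_nonempty (hσ0 : 0 < σ)
    (hmono : ∀ x (h h' : ℝ), 0 < h → h ≤ h' → S x h ⊆ S x h')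
    (heng : ∀ x y (h : ℝ), 0 < h → (S x h ∩ S y h).Nonempty → S y h ⊆ S x (h / σ))
    {x y : α} {a b : ℝ} (ha : 0 < a) (hb : 0 < b) (hab : a ≤ 2 * b)
    (hne : (S y (σ * a / 2) ∩ S x (σ * b / 2)).Nonempty) :
    S y (σ * a / 2) ⊆ S x b := by
  have hy : S y (σ * a / 2) ⊆ S y (σ * b) :=
    hmono y _ _ (by positivity) (by nlinarith)
  have hx : S x (σ * b / 2) ⊆ S x (σ * b) := hmono x _ _ (by positivity) (half_le_self (by positivity))
  have hengulf : S y (σ * b) ⊆ S x (σ * b / σ) := by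
    obtain ⟨z, hzy, hzx⟩ := hne
    exact heng x y _ (by positivity) ⟨z, hx hzx, hy hzy⟩
  rw [mul_div_cancel_left₀ b hσ0.ne'] at hengulf
  exact hy.trans hengulf

theorem exists_pairwiseDisjoint_sections_covering (hσ0 : 0 < σ)
    (hmem : ∀ x (h : ℝ), 0 < h → x ∈ S x h)
    (hmono : ∀ x (h h' : ℝ), 0 < h → h ≤ h' → S x h ⊆ S x h')
    (heng : ∀ x y (h : ℝ), 0 < h → (S x h ∩ S y h).Nonempty → S y h ⊆ S x (h / σ))
    {T : Set α} {h : α → ℝ} (hh : ∀ x ∈ T, 0 < h x) (hbdd : BddAbove (h '' T)) :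
    ∃ u ⊆ T, u.PairwiseDisjoint (fun x => S x (σ * h x / 2)) ∧
      ⋃ y ∈ T, S y (σ * h y / 2) ⊆ ⋃ x ∈ u, S x (h x) := by
  obtain ⟨R, hR⟩ := hbdd
  obtain ⟨u, huT, hdisj, hcov⟩ :=
    Vitali.exists_disjoint_subfamily_covering_enlargement (fun x => S x (σ * h x / 2)) T h 2
      one_lt_two (fun x hx => (hh x hx).le) R (fun x hx => hR (mem_image_of_mem h hx))
      (fun x hx => ⟨x, hmem x _ (by have := hh x hx; positivity)⟩)
  refine ⟨u, huT, hdisj, iUnion₂_subset fun y hy => ?_⟩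
  obtain ⟨x, hxu, hne, hle⟩ := hcov y hy
  exact (section_subset_of_inter_nonempty hσ0 hmono heng (hh y hy) (hh x (huT hxu)) hle hne).trans
    (subset_biUnion_of_mem (u := fun x => S x (h x)) hxu)

end Sections

theorem vitali_covering_sections_general {n : ℕ}
    (σ : ℝ) (hσ0 : 0 < σ)
    (S : EuclideanSpace ℝ (Fin n) → ℝ → Set (EuclideanSpace ℝ (Fin n)))
    (hopen : ∀ x (h : ℝ), 0 < h → IsOpen (S x h))
    (hmem : ∀ x (h : ℝ), 0 < h → x ∈ S x h)
    (hmono : ∀ x (h h' : ℝ), 0 < h → h ≤ h' → S x h ⊆ S x h')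
    (heng : ∀ x y (h : ℝ), 0 < h → (S x h ∩ S y h).Nonempty → S y h ⊆ S x (h / σ))
    (D : Set (EuclideanSpace ℝ (Fin n))) (hD : IsCompact D)
    (h : EuclideanSpace ℝ (Fin n) → ℝ) (hh : ∀ x ∈ D, 0 < h x) :
    ∃ (m : ℕ) (x : Fin m → EuclideanSpace ℝ (Fin n)),
      (∀ i, x i ∈ D) ∧
      D ⊆ ⋃ i, S (x i) (h (x i)) ∧
      Pairwise fun i j => Disjoint (S (x i) (σ * h (x i) / 2)) (S (x j) (σ * h (x j) / 2)) := by
  have hsmall : ∀ y ∈ D, 0 < σ * h y / 2 := fun y hy => by have := hh y hy; positivity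
  obtain ⟨T, hTD, hT, hDT⟩ := hD.elim_finite_subcover_image
    (fun y hy => hopen y _ (hsmall y hy)) (fun y hy => mem_biUnion hy (hmem y _ (hsmall y hy)))
  obtain ⟨u, huT, hdisj, hcov⟩ := exists_pairwiseDisjoint_sections_covering hσ0 hmem hmono heng
    (fun x hx => hh x (hTD hx)) (hT.image h).bddAbove
  obtain ⟨m, x, hinj, rfl⟩ := (hT.subset huT).fin_param
  refine ⟨m, x, fun i => hTD (huT (mem_range_self i)), ?_,
    hdisj.on_injective hinj mem_range_self⟩
  rw [biUnion_range] at hcov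
  exact hDT.trans hcov

/-- Vitali-type covering theorem for families of "sections" `S(x,h)`
satisfying openness, monotonicity in `h`, and the engulfing property with constant
`σ ∈ (0,1)`: any compact set `D` with a bounded height function `h` can be covered by
finitely many sections `S(xᵢ, h(xᵢ))` with `xᵢ ∈ D` such that the sections
`S(xᵢ, σ h(xᵢ)/2)` are pairwise disjoint. -/
theorem vitali_covering_sections {n : ℕ} (hn : 1 ≤ n)
    (σ : ℝ) (hσ0 : 0 < σ) (hσ1 : σ < 1)
    (S : EuclideanSpace ℝ (Fin n) → ℝ → Set (EuclideanSpace ℝ (Fin n)))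
    (hopen : ∀ x (h : ℝ), 0 < h → IsOpen (S x h))
    (hmem : ∀ x (h : ℝ), 0 < h → x ∈ S x h)
    (hmono : ∀ x (h h' : ℝ), 0 < h → h ≤ h' → S x h ⊆ S x h')
    (heng : ∀ x y (h : ℝ), 0 < h → (S x h ∩ S y h).Nonempty → S y h ⊆ S x (h / σ))
    (D : Set (EuclideanSpace ℝ (Fin n))) (hD : IsCompact D)
    (h : EuclideanSpace ℝ (Fin n) → ℝ) (hh : ∀ x ∈ D, 0 < h x)
    (H : ℝ) (hH : ∀ x ∈ D, h x ≤ H) :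
    ∃ (m : ℕ) (x : Fin m → EuclideanSpace ℝ (Fin n)),
      (∀ i, x i ∈ D) ∧
      D ⊆ ⋃ i, S (x i) (h (x i)) ∧
      Pairwise fun i j => Disjoint (S (x i) (σ * h (x i) / 2)) (S (x j) (σ * h (x j) / 2)) :=
  vitali_covering_sections_general σ hσ0 S hopen hmem hmono heng D hD h hh
end

section
/- Let n ≥ 1, let v : ℝⁿ → ℝ be a C¹ function, let h > 0, and let q̄ ∈ ℝⁿ with v(q̄) = 0. For t > 0 set Q_t := {q ∈ ℝⁿ : v(q) ≤ t}. Assume that Q_h is convex and that there exist constants K₀ ≥ 1 and M > 0 such that: (a) for every q ∈ Q_h one has (q − q̄)/K₀ ∈ Q_{2h}; (b) Dv(p)·ξ ≤ M·h for every p ∈ Q_h and every ξ ∈ Q_{2h}. Then for every s ∈ (0, 1/(2K₀M)] and every q ∈ Q_h one has v(q̄ + s(q − q̄)) ≤ h/2; that is, q̄ + s(Q_h − q̄) ⊆ Q_{h/2}. -/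
/-!
Along the ray `t ↦ q̄ + t • s • (q - q̄)` the function `v` starts at `0`, and as long as it stays
in `Q_h` its slope is at most `s K₀ M h ≤ h / 2`, by (a) and (b) applied to `K₀⁻¹ • (q - q̄)`.
A barrier argument shows that it therefore never leaves `Q_h` for `t ∈ [0, 1]`, so it grows by at
most `h / 2`.
-/

open Set

theorem image_le_of_sublevel_deriv_lt {φ φ' : ℝ → ℝ} {L H : ℝ}
    (hφ : ∀ t ∈ Icc (0 : ℝ) 1, HasDerivAt φ (φ' t) t) (h0 : φ 0 ≤ 0) (hL : 0 ≤ L)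
    (hLH : L ≤ H) (hbound : ∀ t ∈ Ico (0 : ℝ) 1, φ t ≤ H → φ' t < L) : φ 1 ≤ L := by
  have hbarrier : ∀ t, HasDerivAt (fun t => L * t) L t := fun t => by
    simpa using (hasDerivAt_id t).const_mul L
  have := image_le_of_deriv_right_lt_deriv_boundary' (B := fun t => L * t)
    (fun t ht => (hφ t ht).continuousAt.continuousWithinAt)
    (fun t ht => (hφ t (Ico_subset_Icc_self ht)).hasDerivWithinAt) (by simpa using h0)
    (fun t _ => (hbarrier t).continuousAt.continuousWithinAt)
    (fun t _ => (hbarrier t).hasDerivWithinAt)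
    -- where `φ` touches the barrier, `φ t = L * t ≤ L ≤ H`, so the slope bound is available
    (fun t ht heq => hbound t ht <| by
      rw [heq]; nlinarith [ht.1, ht.2])
    (right_mem_Icc.2 zero_le_one)
  simpa using this

theorem image_le_of_sublevel_deriv_le {φ φ' : ℝ → ℝ} {L H : ℝ}
    (hφ : ∀ t ∈ Icc (0 : ℝ) 1, HasDerivAt φ (φ' t) t) (h0 : φ 0 ≤ 0) (hL : 0 ≤ L)
    (hLH : L < H) (hbound : ∀ t ∈ Ico (0 : ℝ) 1, φ t ≤ H → φ' t ≤ L) : φ 1 ≤ L := by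
  refine le_of_forall_gt_imp_ge_of_dense fun L' hL' => ?_
  calc φ 1 ≤ min L' ((L + H) / 2) :=
        image_le_of_sublevel_deriv_lt hφ h0 (by grind) (by grind)
          fun t ht hφt => (hbound t ht hφt).trans_lt (by grind)
    _ ≤ L' := min_le_left _ _

theorem apply_add_le_of_sublevel_fderiv_le {E : Type*} [NormedAddCommGroup E]
    [NormedSpace ℝ E] {v : E → ℝ} (hv : Differentiable ℝ v) {x c : E} {L H : ℝ}
    (hx : v x ≤ 0) (hL : 0 ≤ L) (hLH : L < H)
    (hc : ∀ p, v p ≤ H → fderiv ℝ v p c ≤ L) : v (x + c) ≤ L := by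
  have hray : ∀ t : ℝ, HasDerivAt (fun t : ℝ => x + t • c) c t := fun t => by
    simpa using ((hasDerivAt_id t).smul_const c).const_add x
  simpa using image_le_of_sublevel_deriv_le (φ := fun t : ℝ => v (x + t • c))
    (fun t _ => (hv _).hasFDerivAt.comp_hasDerivAt t (hray t)) (by simpa using hx) hL hLH
    fun t _ => hc _

theorem section_dilation_inclusion_general {n : ℕ}
    (v : EuclideanSpace ℝ (Fin n) → ℝ) (hv : ContDiff ℝ 1 v)
    (h : ℝ) (hh : 0 < h)
    (qbar : EuclideanSpace ℝ (Fin n)) (hqbar : v qbar = 0)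
    (K₀ M : ℝ) (hK₀ : 1 ≤ K₀) (hM : 0 < M)
    (ha : ∀ q ∈ {q : EuclideanSpace ℝ (Fin n) | v q ≤ h},
      (K₀⁻¹ : ℝ) • (q - qbar) ∈ {q : EuclideanSpace ℝ (Fin n) | v q ≤ 2 * h})
    (hb : ∀ p ∈ {q : EuclideanSpace ℝ (Fin n) | v q ≤ h},
      ∀ ξ ∈ {q : EuclideanSpace ℝ (Fin n) | v q ≤ 2 * h}, fderiv ℝ v p ξ ≤ M * h) :
    ∀ s : ℝ, 0 < s → s ≤ 1 / (2 * K₀ * M) →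
      ∀ q ∈ {q : EuclideanSpace ℝ (Fin n) | v q ≤ h},
        v (qbar + s • (q - qbar)) ≤ h / 2 := by
  intro s hs hs' q hq
  have hK₀pos : 0 < K₀ := by linarith
  have hsKM : s * K₀ * M ≤ 1 / 2 := by
    rw [le_div_iff₀ (by positivity)] at hs'
    linarith
  refine apply_add_le_of_sublevel_fderiv_le (H := h) (hv.differentiable one_ne_zero) hqbar.le
    (by positivity) (by linarith) fun p hp => ?_
  calc fderiv ℝ v p (s • (q - qbar))
      = s * K₀ * fderiv ℝ v p (K₀⁻¹ • (q - qbar)) := by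
        rw [map_smul, map_smul, smul_eq_mul, smul_eq_mul]
        field_simp
    _ ≤ s * K₀ * (M * h) := by gcongr; exact hb p hp _ (ha q hq)
    _ = s * K₀ * M * h := by ring
    _ ≤ 1 / 2 * h := by gcongr
    _ = h / 2 := by ring

/-- key inclusion in the proof of Proposition 2.2(ii). If `v` is `C¹`,
`v(q̄) = 0`, the sublevel set `Q_h = {v ≤ h}` is convex, `(q − q̄)/K₀ ∈ Q_{2h}` for all
`q ∈ Q_h`, and `Dv(p)·ξ ≤ M·h` for all `p ∈ Q_h`, `ξ ∈ Q_{2h}`, then for every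
`s ∈ (0, 1/(2K₀M)]` and `q ∈ Q_h` one has `v(q̄ + s(q − q̄)) ≤ h/2`. -/
theorem section_dilation_inclusion {n : ℕ} (hn : 1 ≤ n)
    (v : EuclideanSpace ℝ (Fin n) → ℝ) (hv : ContDiff ℝ 1 v)
    (h : ℝ) (hh : 0 < h)
    (qbar : EuclideanSpace ℝ (Fin n)) (hqbar : v qbar = 0)
    (K₀ M : ℝ) (hK₀ : 1 ≤ K₀) (hM : 0 < M)
    (hconv : Convex ℝ {q : EuclideanSpace ℝ (Fin n) | v q ≤ h})
    (ha : ∀ q ∈ {q : EuclideanSpace ℝ (Fin n) | v q ≤ h},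
      (K₀⁻¹ : ℝ) • (q - qbar) ∈ {q : EuclideanSpace ℝ (Fin n) | v q ≤ 2 * h})
    (hb : ∀ p ∈ {q : EuclideanSpace ℝ (Fin n) | v q ≤ h},
      ∀ ξ ∈ {q : EuclideanSpace ℝ (Fin n) | v q ≤ 2 * h}, fderiv ℝ v p ξ ≤ M * h) :
    ∀ s : ℝ, 0 < s → s ≤ 1 / (2 * K₀ * M) →
      ∀ q ∈ {q : EuclideanSpace ℝ (Fin n) | v q ≤ h},
        v (qbar + s • (q - qbar)) ≤ h / 2 :=
  section_dilation_inclusion_general v hv h hh qbar hqbar K₀ M hK₀ hM ha hb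
end

section
/- Let n ≥ 1, q̄ ∈ ℝⁿ, ρ > 0 and s ∈ (0,1), and for each h ∈ (0,ρ] let Q_h ⊆ ℝⁿ be a convex set with q̄ ∈ Q_h, such that Q_h ⊆ Q_{h'} whenever 0 < h ≤ h' ≤ ρ, and such that q̄ + s(Q_h − q̄) ⊆ Q_{h/2} for every h ∈ (0,ρ]. Then, with α := 2·log(1/s)/log 2, for every μ ∈ (0,1/2] and every h ∈ (0,ρ] one has q̄ + μ^α (Q_h − q̄) ⊆ Q_{μh}. -/
/-!
Iterating the shrinking `k + 1` times maps `Q_h` into `Q_{h/2^{k+1}}` with factor `s^{k+1}`.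
Choosing `k ≥ 1` with `2^{-(k+1)} < μ ≤ 2^{-k}`, monotonicity puts this point in `Q_{μh}`, and
the exponent is chosen so that `(1/2)^α = s²`, whence `μ^α ≤ s^{2k} ≤ s^{k+1}`. Star-convexity
of `Q_{μh}` about `q̄` then lets us shrink the factor further, down to `μ^α`.
-/

open Real

theorem StarConvex.add_smul_sub_mem_of_le {𝕜 E : Type*} [Field 𝕜] [LinearOrder 𝕜]
    [IsStrictOrderedRing 𝕜] [AddCommGroup E] [Module 𝕜 E] {x y : E} {S : Set E} {r t : 𝕜}
    (hS : StarConvex 𝕜 x S) (hy : x + t • (y - x) ∈ S) (hr : 0 ≤ r) (hrt : r ≤ t) :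
    x + r • (y - x) ∈ S := by
  rcases hrt.eq_or_lt with rfl | hrt
  · exact hy
  have ht : 0 < t := hr.trans_lt hrt
  have key := hS.add_smul_sub_mem hy (div_nonneg hr ht.le) (div_le_one_of_le₀ hrt.le ht.le)
  rwa [add_sub_cancel_left, smul_smul, div_mul_cancel₀ r ht.ne'] at key

theorem mem_of_iterate_shrink {E : Type*} [AddCommGroup E] [Module ℝ E] {Q : ℝ → Set E}
    {a : E} {ρ s : ℝ}
    (hshrink : ∀ h : ℝ, 0 < h → h ≤ ρ → ∀ q ∈ Q h, a + s • (q - a) ∈ Q (h / 2))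
    {h : ℝ} (h0 : 0 < h) (hρ : h ≤ ρ) {q : E} (hq : q ∈ Q h) :
    ∀ m : ℕ, a + s ^ m • (q - a) ∈ Q (h / 2 ^ m)
  | 0 => by simpa using hq
  | m + 1 => by
    have hle : h / 2 ^ m ≤ ρ := (div_le_self h0.le (one_le_pow₀ one_le_two)).trans hρ
    have step := hshrink _ (by positivity) hle _ (mem_of_iterate_shrink hshrink h0 hρ hq m)
    rwa [add_sub_cancel_left, smul_smul, ← pow_succ', div_div, ← pow_succ] at step

theorem half_rpow_two_mul_log_inv_div_log_two {s : ℝ} (hs : 0 < s) :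
    (1 / 2 : ℝ) ^ (2 * log (1 / s) / log 2) = s ^ 2 := by
  have hlog : log (1 / 2) * (2 * log (1 / s) / log 2) = log (s ^ 2) := by
    have h2 : log 2 ≠ 0 := (log_pos one_lt_two).ne'
    rw [one_div, one_div, log_inv, log_inv, log_pow]
    field_simp
    ring
  rw [rpow_def_of_pos (by norm_num), hlog, exp_log (by positivity)]

theorem rpow_two_mul_log_inv_div_log_two_le_pow {s μ : ℝ} {k : ℕ} (hs0 : 0 < s) (hs1 : s ≤ 1)
    (hμ0 : 0 < μ) (hμ : μ ≤ (1 / 2) ^ k) (hk : 1 ≤ k) :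
    μ ^ (2 * log (1 / s) / log 2) ≤ s ^ (k + 1) := by
  have hα : 0 ≤ 2 * log (1 / s) / log 2 := by
    have : 0 ≤ log (1 / s) := log_nonneg (one_le_one_div hs0 hs1)
    positivity
  calc μ ^ (2 * log (1 / s) / log 2) ≤ ((1 / 2 : ℝ) ^ k) ^ (2 * log (1 / s) / log 2) :=
        rpow_le_rpow hμ0.le hμ hα
    _ = ((1 / 2 : ℝ) ^ (2 * log (1 / s) / log 2)) ^ k := by
        rw [← rpow_natCast, ← rpow_mul (by norm_num), mul_comm, rpow_mul (by norm_num),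
          rpow_natCast]
    _ = s ^ (2 * k) := by rw [half_rpow_two_mul_log_inv_div_log_two hs0, ← pow_mul]
    _ ≤ s ^ (k + 1) := pow_le_pow_of_le_one hs0.le hs1 (by omega)

theorem exists_dyadic_bracket {μ : ℝ} (hμ0 : 0 < μ) (hμ : μ ≤ 1 / 2) :
    ∃ k : ℕ, 1 ≤ k ∧ (1 / 2 : ℝ) ^ (k + 1) < μ ∧ μ ≤ (1 / 2) ^ k := by
  obtain ⟨k, hlow, hup⟩ :=
    exists_nat_pow_near_of_lt_one hμ0 (by linarith) (by norm_num : (0 : ℝ) < 1 / 2)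
      (by norm_num)
  refine ⟨k, Nat.one_le_iff_ne_zero.2 ?_, hlow, hup⟩
  rintro rfl
  norm_num at hlow
  linarith

theorem dyadic_dilation_iteration_general {n : ℕ}
    (qbar : EuclideanSpace ℝ (Fin n)) (ρ s : ℝ)
    (hs0 : 0 < s) (hs1 : s < 1)
    (Q : ℝ → Set (EuclideanSpace ℝ (Fin n)))
    (hconv : ∀ h : ℝ, 0 < h → h ≤ ρ → Convex ℝ (Q h))
    (hmem : ∀ h : ℝ, 0 < h → h ≤ ρ → qbar ∈ Q h)
    (hmono : ∀ h h' : ℝ, 0 < h → h ≤ h' → h' ≤ ρ → Q h ⊆ Q h')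
    (hshrink : ∀ h : ℝ, 0 < h → h ≤ ρ → ∀ q ∈ Q h, qbar + s • (q - qbar) ∈ Q (h / 2)) :
    ∀ μ : ℝ, 0 < μ → μ ≤ 1 / 2 → ∀ h : ℝ, 0 < h → h ≤ ρ →
      ∀ q ∈ Q h,
        qbar + (μ ^ (2 * Real.log (1 / s) / Real.log 2) : ℝ) • (q - qbar) ∈ Q (μ * h) := by
  intro μ hμ0 hμ h h0 hρ q hq
  obtain ⟨k, hk, hlow, hup⟩ := exists_dyadic_bracket hμ0 hμ
  have hμh0 : 0 < μ * h := mul_pos hμ0 h0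
  have hμhρ : μ * h ≤ ρ := (mul_le_of_le_one_left h0.le (by linarith)).trans hρ
  have hscale : h / 2 ^ (k + 1) ≤ μ * h := by
    rw [div_eq_mul_inv, mul_comm, ← inv_pow, ← one_div]
    exact mul_le_mul_of_nonneg_right hlow.le h0.le
  have hiter : qbar + s ^ (k + 1) • (q - qbar) ∈ Q (μ * h) :=
    hmono _ _ (by positivity) hscale hμhρ (mem_of_iterate_shrink hshrink h0 hρ hq (k + 1))
  exact ((hconv _ hμh0 hμhρ).starConvex (hmem _ hμh0 hμhρ)).add_smul_sub_mem_of_le hiter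
    (rpow_nonneg hμ0.le _) (rpow_two_mul_log_inv_div_log_two_le_pow hs0 hs1.le hμ0 hup hk)

/-- dyadic iteration. If the convex sets `Q_h ∋ q̄` (for `h ∈ (0,ρ]`) are
nondecreasing in `h` and satisfy the fixed-factor shrinking
`q̄ + s(Q_h − q̄) ⊆ Q_{h/2}`, then, with `α := 2·log(1/s)/log 2`, for every
`μ ∈ (0,1/2]` and `h ∈ (0,ρ]` one has `q̄ + μ^α (Q_h − q̄) ⊆ Q_{μh}`. -/
theorem dyadic_dilation_iteration {n : ℕ} (hn : 1 ≤ n)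
    (qbar : EuclideanSpace ℝ (Fin n)) (ρ s : ℝ)
    (hρ : 0 < ρ) (hs0 : 0 < s) (hs1 : s < 1)
    (Q : ℝ → Set (EuclideanSpace ℝ (Fin n)))
    (hconv : ∀ h : ℝ, 0 < h → h ≤ ρ → Convex ℝ (Q h))
    (hmem : ∀ h : ℝ, 0 < h → h ≤ ρ → qbar ∈ Q h)
    (hmono : ∀ h h' : ℝ, 0 < h → h ≤ h' → h' ≤ ρ → Q h ⊆ Q h')
    (hshrink : ∀ h : ℝ, 0 < h → h ≤ ρ → ∀ q ∈ Q h, qbar + s • (q - qbar) ∈ Q (h / 2)) :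
    ∀ μ : ℝ, 0 < μ → μ ≤ 1 / 2 → ∀ h : ℝ, 0 < h → h ≤ ρ →
      ∀ q ∈ Q h,
        qbar + (μ ^ (2 * Real.log (1 / s) / Real.log 2) : ℝ) • (q - qbar) ∈ Q (μ * h) :=
  dyadic_dilation_iteration_general qbar ρ s hs0 hs1 Q hconv hmem hmono hshrink
end
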